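/- Let G be a group and π ∈ G with π² = 1. With notation as before (tuples with 0-th entry π, operadic compositions ∘ₖ, and cyclic action τ_m given entrywise by l ↦ π f₁⁻¹ f_{l+1} with f₀ = π), for 2 ≤ k ≤ i one has (f ∘ₖ g).τ_{i+j-1} = (f.τ_i) ∘_{k-1} g. -/

import Mathlib

/-- The operadic composition `f ∘ₖ g` of ℕ-indexed tuples, where `g` has arity `j`:
the entry `fₖ` is replaced by the block `(fₖg₁, …, fₖg_j)`. -/
def ncomp {G : Type*} [Group G] (f g : ℕ → G) (k j : ℕ) : ℕ → G :=
  fun l => if l < k then f l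
    else if l < k + j then f k * g (l - k + 1)
    else f (l - j + 1)

/-- The action of the long cycle `τ_m = (0 1 … m)` on a tuple `f` of arity `m`
with `f₀ = π`:  `(f.τ_m)_l = π f₁⁻¹ f_{l+1}` for `l < m` and `(f.τ_m)_m = π f₁⁻¹ π`. -/
def ntau {G : Type*} [Group G] (π : G) (f : ℕ → G) (m : ℕ) : ℕ → G :=
  fun l => if l < m then π * (f 1)⁻¹ * f (l + 1)
    else if l = m then π * (f 1)⁻¹ * π
    else f l

/-! Both sides are computed entrywise. Since `k ≥ 2`, the composition `∘ₖ` leaves the entry `f₁`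
unchanged, so both sides multiply the same entries by the same prefactor `π f₁⁻¹`; the shift
`l ↦ l + 1` performed by `τ` moves the block inserted at `k` to position `k - 1`. -/

section Evaluation

variable {G : Type*} [Group G]

theorem ncomp_of_lt {f g : ℕ → G} {k j l : ℕ} (hl : l < k) : ncomp f g k j l = f l := by
  simp only [ncomp, if_pos hl]

theorem ncomp_of_le_of_lt {f g : ℕ → G} {k j l : ℕ} (hkl : k ≤ l) (hl : l < k + j) :
    ncomp f g k j l = f k * g (l - k + 1) := by
  simp only [ncomp, if_neg (Nat.not_lt.mpr hkl), if_pos hl]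

theorem ncomp_of_le {f g : ℕ → G} {k j l : ℕ} (hl : k + j ≤ l) :
    ncomp f g k j l = f (l - j + 1) := by
  simp only [ncomp, if_neg (show ¬l < k by omega), if_neg (Nat.not_lt.mpr hl)]

theorem ntau_of_lt {π : G} {f : ℕ → G} {m l : ℕ} (hl : l < m) :
    ntau π f m l = π * (f 1)⁻¹ * f (l + 1) := by
  simp only [ntau, if_pos hl]

theorem ntau_self (π : G) (f : ℕ → G) (m : ℕ) : ntau π f m m = π * (f 1)⁻¹ * π := by
  simp only [ntau, lt_irrefl, if_false, if_true]

end Evaluation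

theorem stmt3_general {G : Type*} [Group G] (π : G) (i j k : ℕ)
    (hk : 2 ≤ k) (hki : k ≤ i)
    (f g : ℕ → G) :
    ∀ l ≤ i + j - 1,
      ntau π (ncomp f g k j) (i + j - 1) l = ncomp (ntau π f i) g (k - 1) j l := by
  intro l hl
  have hf₁ : ncomp f g k j 1 = f 1 := ncomp_of_lt (by omega)
  rcases lt_or_ge l (k - 1) with hl₁ | hl₁
  · rw [ntau_of_lt (by omega), hf₁, ncomp_of_lt (by omega), ncomp_of_lt hl₁, ntau_of_lt (by omega)]
  rcases lt_or_ge l (k - 1 + j) with hl₂ | hl₂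
  · rw [ntau_of_lt (by omega), hf₁, ncomp_of_le_of_lt (by omega) (by omega),
      ncomp_of_le_of_lt hl₁ hl₂, ntau_of_lt (by omega), Nat.sub_add_cancel (by omega : 1 ≤ k),
      show l + 1 - k = l - (k - 1) by omega]
    group
  rcases lt_or_ge l (i + j - 1) with hl₃ | hl₃
  · rw [ntau_of_lt hl₃, hf₁, ncomp_of_le (by omega), ncomp_of_le hl₂, ntau_of_lt (by omega),
      show l + 1 - j + 1 = l - j + 1 + 1 by omega]
  · obtain rfl : l = i + j - 1 := by omega
    rw [ntau_self, hf₁, ncomp_of_le hl₂, show i + j - 1 - j + 1 = i by omega, ntau_self]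

/-- cyclic operad axiom (iii): for `f ∈ O(i)`, `g ∈ O(j)` and
`2 ≤ k ≤ i`, one has `(f ∘ₖ g).τ_{i+j-1} = (f.τ_i) ∘_{k-1} g`. -/
theorem stmt3 {G : Type*} [Group G] (π : G) (hπ : π * π = 1) (i j k : ℕ)
    (hk : 2 ≤ k) (hki : k ≤ i) (hj : 1 ≤ j)
    (f g : ℕ → G) (hf : f 0 = π) (hg : g 0 = π) :
    ∀ l ≤ i + j - 1,
      ntau π (ncomp f g k j) (i + j - 1) l = ncomp (ntau π f i) g (k - 1) j l :=
  stmt3_general π i j k hk hki f g
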